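/- Let N ≥ 2 be an integer and let f₀(x) = Σ_{j=1}^∞ ⟨x,e_j⟩^N, which defines an element of 𝒜_u(B_{ℓ₂}). Then for every g ∈ ℋ^∞(B_{ℓ₂},ℓ₂) with ‖g‖ < 1 there exists an injective map Ψ from the open unit ball of ℋ^∞(B_{ℓ₂}) into ℋ^∞(B_{ℓ₂}) such that Ψ(h) ∈ 𝒞ℓ(f₀,g) for every h in the open unit ball of ℋ^∞(B_{ℓ₂}), and, for every x ∈ B_{ℓ₂}, the map h ↦ Ψ(h)(x) is holomorphic on the open unit ball of ℋ^∞(B_{ℓ₂}). -/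

import Mathlib

open Metric Set Filter
open scoped ENNReal

noncomputable section

/-- `ℓ2` is the complex Hilbert space of square-summable sequences indexed by `ℕ`. -/
abbrev ℓ2 : Type := lp (fun _ : ℕ => ℂ) 2

/-- The open unit ball of `ℓ2`. -/
def oB : Set ℓ2 := Metric.ball 0 1

/-- The closed unit ball of `ℓ2`. -/
def cB : Set ℓ2 := Metric.closedBall 0 1

/-- The unit sphere of `ℓ2`. -/
def sph : Set ℓ2 := Metric.sphere 0 1

/-- The coordinate functional `x ↦ ⟨x, eₙ⟩ = xₙ` (inner product linear in the first variable). -/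
def coord (n : ℕ) : ℓ2 → ℂ := fun x => x n

/-- Supremum norm on the open unit ball, for scalar-valued functions. -/
def supNorm (f : ℓ2 → ℂ) : ℝ := ⨆ x : oB, ‖f (x : ℓ2)‖

/-- Supremum norm on the open unit ball, for `ℓ2`-valued functions. -/
def supNormV (g : ℓ2 → ℓ2) : ℝ := ⨆ x : oB, ‖g (x : ℓ2)‖

/-- Membership in `𝒜ᵤ(B)`: holomorphic on the open unit ball and uniformly continuous there. -/
def MemAu (f : ℓ2 → ℂ) : Prop :=
  DifferentiableOn ℂ f oB ∧ UniformContinuousOn f oB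

/-- Membership in `ℋ^∞(B)`: holomorphic and bounded on the open unit ball. -/
def MemHinf (f : ℓ2 → ℂ) : Prop :=
  DifferentiableOn ℂ f oB ∧ ∃ C, ∀ x ∈ oB, ‖f x‖ ≤ C

/-- Membership in `ℋ^∞(B,ℓ2)`: holomorphic and bounded on the open unit ball, `ℓ2`-valued. -/
def MemHinfV (g : ℓ2 → ℓ2) : Prop :=
  DifferentiableOn ℂ g oB ∧ ∃ C, ∀ x ∈ oB, ‖g x‖ ≤ C

/-- `fext` is (a representative of) the unique continuous extension `f̃` of `f` to the
closed unit ball. -/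
def IsExt (f fext : ℓ2 → ℂ) : Prop :=
  ContinuousOn fext cB ∧ Set.EqOn fext f oB

/-- An element of the scalar-valued spectrum `ℳᵤ(B)`: a nonzero continuous `ℂ`-algebra
homomorphism `𝒜ᵤ(B) → ℂ`, encoded as a map on representatives. -/
structure MuHom where
  toFun : (ℓ2 → ℂ) → ℂ
  map_add : ∀ f g, MemAu f → MemAu g → toFun (f + g) = toFun f + toFun g
  map_mul : ∀ f g, MemAu f → MemAu g → toFun (f * g) = toFun f * toFun g
  map_smul : ∀ (c : ℂ) (f), MemAu f → toFun (c • f) = c * toFun f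
  respects : ∀ f g, MemAu f → MemAu g → Set.EqOn f g oB → toFun f = toFun g
  nonzero : ∃ f, MemAu f ∧ toFun f ≠ 0
  cont : ∃ C, ∀ f, MemAu f → ‖toFun f‖ ≤ C * supNorm f

/-- An element of the vector-valued spectrum `ℳ_{u,∞}(B,B)`: a nonzero continuous `ℂ`-algebra
homomorphism `𝒜ᵤ(B) → ℋ^∞(B)`, encoded as a map on representatives. -/
structure MuInfHom where
  toFun : (ℓ2 → ℂ) → (ℓ2 → ℂ)
  maps_mem : ∀ f, MemAu f → MemHinf (toFun f)
  map_add : ∀ f g, MemAu f → MemAu g → ∀ x ∈ oB, toFun (f + g) x = toFun f x + toFun g x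
  map_mul : ∀ f g, MemAu f → MemAu g → ∀ x ∈ oB, toFun (f * g) x = toFun f x * toFun g x
  map_smul : ∀ (c : ℂ) (f), MemAu f → ∀ x ∈ oB, toFun (c • f) x = c * toFun f x
  respects : ∀ f g, MemAu f → MemAu g → Set.EqOn f g oB → Set.EqOn (toFun f) (toFun g) oB
  nonzero : ∃ f, MemAu f ∧ ∃ x ∈ oB, toFun f x ≠ 0
  cont : ∃ C, ∀ f, MemAu f → ∀ x ∈ oB, ‖toFun f x‖ ≤ C * supNorm f

/-- An element of the scalar-valued spectrum `ℳ_∞(B)`: a nonzero continuous `ℂ`-algebra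
homomorphism `ℋ^∞(B) → ℂ`, encoded as a map on representatives. -/
structure MInfHom where
  toFun : (ℓ2 → ℂ) → ℂ
  map_add : ∀ f g, MemHinf f → MemHinf g → toFun (f + g) = toFun f + toFun g
  map_mul : ∀ f g, MemHinf f → MemHinf g → toFun (f * g) = toFun f * toFun g
  map_smul : ∀ (c : ℂ) (f), MemHinf f → toFun (c • f) = c * toFun f
  respects : ∀ f g, MemHinf f → MemHinf g → Set.EqOn f g oB → toFun f = toFun g
  nonzero : ∃ f, MemHinf f ∧ toFun f ≠ 0
  cont : ∃ C, ∀ f, MemHinf f → ‖toFun f‖ ≤ C * supNorm f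

/-- `ξ(Φ) = g`: the projection of `Φ` is the function `g`, i.e. `Φ(⟨·,eₙ⟩)(x) = g(x)ₙ`. -/
def xiEq (Φ : MuInfHom) (g : ℓ2 → ℓ2) : Prop :=
  ∀ x ∈ oB, ∀ n : ℕ, Φ.toFun (coord n) x = g x n

/-- `Φ = C_g`: `Φ` is the composition homomorphism `f ↦ f̃ ∘ g`. -/
def IsCompHom (Φ : MuInfHom) (g : ℓ2 → ℓ2) : Prop :=
  ∀ f fext, MemAu f → IsExt f fext → ∀ x ∈ oB, Φ.toFun f x = fext (g x)

/-- The open unit ball of `ℋ^∞(B,ℓ2)`. -/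
def ballHV : Set (ℓ2 → ℓ2) := {h | MemHinfV h ∧ supNormV h < 1}

/-- The open unit ball of `ℋ^∞(B)`. -/
def ballH : Set (ℓ2 → ℂ) := {h | MemHinf h ∧ supNorm h < 1}

/-- `F` is holomorphic on the open unit ball of `ℋ^∞(B,ℓ2)`: it is locally bounded there and
`ℂ`-differentiable along every complex line (which, for maps on a ball of a Banach space, is
equivalent to Fréchet holomorphy). -/
def HolomorphicOnBallHV (F : (ℓ2 → ℓ2) → ℂ) : Prop :=
  (∀ h ∈ ballHV, ∃ ε > 0, ∃ C, ∀ k ∈ ballHV, supNormV (k - h) < ε → ‖F k‖ ≤ C) ∧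
  (∀ h ∈ ballHV, ∀ k, MemHinfV k →
    DifferentiableOn ℂ (fun z : ℂ => F (h + z • k)) {z : ℂ | (h + z • k) ∈ ballHV})

/-- `F` is holomorphic on the open unit ball of `ℋ^∞(B)`: it is locally bounded there and
`ℂ`-differentiable along every complex line. -/
def HolomorphicOnBallH (F : (ℓ2 → ℂ) → ℂ) : Prop :=
  (∀ h ∈ ballH, ∃ ε > 0, ∃ C, ∀ k ∈ ballH, supNorm (k - h) < ε → ‖F k‖ ≤ C) ∧
  (∀ h ∈ ballH, ∀ k, MemHinf k →
    DifferentiableOn ℂ (fun z : ℂ => F (h + z • k)) {z : ℂ | (h + z • k) ∈ ballH})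

/-- `h ∈ 𝒞ℓ(f,g)` (with `fext = f̃` the continuous extension of `f` to the closed ball):
there is a net `(g_α)` in the open unit ball of `ℋ^∞(B,ℓ2)` converging weak-star to `g`
(pointwise weak convergence of values) with `f̃(g_α(y)) → h(y)` for every `y ∈ B`. -/
def InCluster (fext : ℓ2 → ℂ) (g : ℓ2 → ℓ2) (h : ℓ2 → ℂ) : Prop :=
  ∃ (ι : Type) (l : Filter ι), l.NeBot ∧ ∃ gA : ι → ℓ2 → ℓ2,
    (∀ i, gA i ∈ ballHV) ∧
    (∀ y ∈ oB, ∀ u : ℓ2,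
      Filter.Tendsto (fun i => (inner ℂ (gA i y) u : ℂ)) l (nhds (inner ℂ (g y) u))) ∧
    (∀ y ∈ oB, Filter.Tendsto (fun i => fext (gA i y)) l (nhds (h y)))


lemma two_toReal : (2:ℝ≥0∞).toReal = ((2:ℕ):ℝ) := by norm_num

lemma l2_summable_sq (x : ℓ2) : Summable (fun j => ‖x j‖^2) := by
  have h := (lp.memℓp x).summable (p := 2) (by norm_num)
  simp only [two_toReal, Real.rpow_natCast] at h
  exact h

lemma l2_coord_le (x : ℓ2) (j : ℕ) : ‖x j‖ ≤ ‖x‖ :=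
  lp.norm_apply_le_norm (by norm_num) x j

lemma l2_norm_sq (x : ℓ2) : ‖x‖^2 = ∑' j, ‖x j‖^2 := by
  have h := lp.norm_rpow_eq_tsum (p := 2) (by norm_num) x
  simp only [two_toReal, Real.rpow_natCast] at h
  exact h

lemma l2_inner_eq (x y : ℓ2) : (inner ℂ x y : ℂ) = ∑' j, (starRingEnd ℂ) (x j) * y j := by
  rw [lp.inner_eq_tsum]
  exact tsum_congr fun j => by rw [RCLike.inner_apply]; ring

lemma summable_pow_coord {N : ℕ} (hN : 2 ≤ N) (x : ℓ2) (hx : ‖x‖ ≤ 1) :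
    Summable (fun j => (x j)^N) := by
  apply Summable.of_norm_bounded (l2_summable_sq x)
  intro j
  rw [norm_pow]
  exact pow_le_pow_of_le_one (norm_nonneg _) ((l2_coord_le x j).trans hx) hN

lemma tsum_pow_norm_le {N : ℕ} (hN : 2 ≤ N) (x : ℓ2) (hx : ‖x‖ ≤ 1) :
    ‖∑' j, (x j)^N‖ ≤ ‖x‖^2 := by
  calc ‖∑' j, (x j)^N‖ ≤ ∑' j, ‖(x j)^N‖ := by
        apply norm_tsum_le_tsum_norm
        apply (l2_summable_sq x).of_nonneg_of_le (fun j => norm_nonneg _)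
        intro j
        rw [norm_pow]
        exact pow_le_pow_of_le_one (norm_nonneg _) ((l2_coord_le x j).trans hx) hN
  _ ≤ ∑' j, ‖x j‖^2 := by
      apply Summable.tsum_le_tsum _ _ (l2_summable_sq x)
      · intro j
        rw [norm_pow]
        exact pow_le_pow_of_le_one (norm_nonneg _) ((l2_coord_le x j).trans hx) hN
      · apply (l2_summable_sq x).of_nonneg_of_le (fun j => norm_nonneg _)
        intro j
        rw [norm_pow]
        exact pow_le_pow_of_le_one (norm_nonneg _) ((l2_coord_le x j).trans hx) hN
  _ = ‖x‖^2 := (l2_norm_sq x).symm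


lemma norm_near {r : ℝ} (hr : 0 ≤ r) {a : ℂ} (ha : ‖a - r‖ ≤ 1) : ‖a‖ ≤ r + 1 := by
  calc ‖a‖ = ‖(a - r) + (r:ℂ)‖ := by ring_nf
  _ ≤ ‖a - (r:ℂ)‖ + ‖(r:ℂ)‖ := norm_add_le _ _
  _ ≤ 1 + r := by rw [Complex.norm_real, Real.norm_of_nonneg hr]; gcongr
  _ = r + 1 := by ring

lemma pow_near_r {r : ℝ} (hr : 0 ≤ r) {a : ℂ} (ha : ‖a - r‖ ≤ 1) (k : ℕ) :
    ‖a^k - (r:ℂ)^k‖ ≤ (r+1)^k - r^k := by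
  induction k with
  | zero => simp
  | succ k ih =>
    have hna : ‖a‖ ≤ r + 1 := norm_near hr ha
    have key : a^(k+1) - (r:ℂ)^(k+1) = a * (a^k - (r:ℂ)^k) + (a - r) * (r:ℂ)^k := by ring
    have hrk : ‖(r:ℂ)^k‖ = r^k := by
      rw [norm_pow, Complex.norm_real, Real.norm_of_nonneg hr]
    calc ‖a^(k+1) - (r:ℂ)^(k+1)‖ ≤ ‖a * (a^k - (r:ℂ)^k)‖ + ‖(a - r) * (r:ℂ)^k‖ := by
          rw [key]; exact norm_add_le _ _
    _ = ‖a‖ * ‖a^k - (r:ℂ)^k‖ + ‖a - (r:ℂ)‖ * r^k := by rw [norm_mul, norm_mul, hrk]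
    _ ≤ (r+1) * ((r+1)^k - r^k) + 1 * (r^k) := by
          gcongr <;> first | exact norm_nonneg _ | positivity
    _ = (r+1)^(k+1) - r^(k+1) := by ring

lemma pow_mul_near {r : ℝ} (hr : 0 ≤ r) {a b : ℂ} (ha : ‖a - r‖ ≤ 1) (hb : ‖b - r‖ ≤ 1)
    (k m : ℕ) : ‖a^k * b^m - (r:ℂ)^(k+m)‖ ≤ (r+1)^(k+m) - r^(k+m) := by
  have key : a^k * b^m - (r:ℂ)^(k+m) = a^k * (b^m - (r:ℂ)^m) + (a^k - (r:ℂ)^k) * (r:ℂ)^m := by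
    rw [pow_add]; ring
  have hrm : ‖(r:ℂ)^m‖ = r^m := by rw [norm_pow, Complex.norm_real, Real.norm_of_nonneg hr]
  calc ‖a^k * b^m - (r:ℂ)^(k+m)‖ ≤ ‖a^k * (b^m - (r:ℂ)^m)‖ + ‖(a^k - (r:ℂ)^k) * (r:ℂ)^m‖ := by
        rw [key]; exact norm_add_le _ _
  _ = ‖a‖^k * ‖b^m - (r:ℂ)^m‖ + ‖a^k - (r:ℂ)^k‖ * r^m := by
        rw [norm_mul, norm_mul, norm_pow, hrm]
  _ ≤ (r+1)^k * ((r+1)^m - r^m) + ((r+1)^k - r^k) * r^m := by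
        have e1 : ‖a‖^k ≤ (r+1)^k := pow_le_pow_left₀ (norm_nonneg a) (norm_near hr ha) k
        have e2 := pow_near_r hr hb m
        have e3 := pow_near_r hr ha k
        have hb2 : (0:ℝ) ≤ r + 1 := by linarith
        nlinarith [norm_nonneg (b^m - (r:ℂ)^m), norm_nonneg (a^k - (r:ℂ)^k),
          pow_nonneg hr m, pow_nonneg hb2 k, pow_nonneg (norm_nonneg a) k]
  _ = (r+1)^(k+m) - r^(k+m) := by rw [pow_add, pow_add]; ring

lemma ratio_pow_lt_two {N : ℕ} (hN : 2 ≤ N) :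
    ((2*(N:ℝ))+1)^(N-1) < 2 * (2*(N:ℝ))^(N-1) := by
  have hNpos : (0:ℝ) < N := by positivity
  have hR : (0:ℝ) < 2*(N:ℝ) := by positivity
  have h1 : ((2*(N:ℝ))+1) = (2*(N:ℝ)) * (1 + 1/(2*(N:ℝ))) := by field_simp
  have h2 : (1 + 1/(2*(N:ℝ)))^(N-1) < 2 := by
    have hexp1 : (1 + 1/(2*(N:ℝ))) ≤ Real.exp (1/(2*(N:ℝ))) := by
      have := Real.add_one_le_exp (1/(2*(N:ℝ)))
      linarith
    have h3 : (1 + 1/(2*(N:ℝ)))^(N-1) ≤ Real.exp (1/(2*(N:ℝ)))^(N-1) :=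
      pow_le_pow_left₀ (by positivity) hexp1 _
    have h4 : Real.exp (1/(2*(N:ℝ)))^(N-1) = Real.exp ((N-1:ℕ)/(2*(N:ℝ))) := by
      rw [← Real.exp_nat_mul]; ring_nf
    have h5 : ((N-1:ℕ):ℝ)/(2*(N:ℝ)) ≤ 1/2 := by
      rw [div_le_div_iff₀ hR (by norm_num)]
      have : ((N-1:ℕ):ℝ) ≤ (N:ℝ) := by
        exact_mod_cast Nat.cast_le.2 (Nat.sub_le N 1)
      linarith
    have h6 : Real.exp ((N-1:ℕ)/(2*(N:ℝ))) ≤ Real.exp (1/2) := Real.exp_le_exp.2 h5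
    have h7 : Real.exp (1/2) < 2 := by
      have hsq : Real.exp (1/2) ^ 2 = Real.exp 1 := by
        rw [← Real.exp_nat_mul]; norm_num
      nlinarith [Real.exp_one_lt_d9, Real.exp_pos (1/2 : ℝ)]
    calc (1 + 1/(2*(N:ℝ)))^(N-1) ≤ Real.exp ((N-1:ℕ)/(2*(N:ℝ))) := h4 ▸ h3
    _ ≤ Real.exp (1/2) := h6
    _ < 2 := h7
  calc ((2*(N:ℝ))+1)^(N-1) = (2*(N:ℝ))^(N-1) * (1 + 1/(2*(N:ℝ)))^(N-1) := by
        rw [h1, mul_pow]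
  _ < (2*(N:ℝ))^(N-1) * 2 := by
        exact mul_lt_mul_of_pos_left h2 (by positivity)
  _ = 2 * (2*(N:ℝ))^(N-1) := by ring

lemma pow_inj_aux {N : ℕ} (hN : 2 ≤ N) {r : ℝ} (hr : 0 ≤ r)
    (hratio : (r+1)^(N-1) < 2 * r^(N-1)) {z₁ z₂ : ℂ}
    (h₁ : ‖z₁ - r‖ ≤ 1) (h₂ : ‖z₂ - r‖ ≤ 1) (h : z₁^N = z₂^N) : z₁ = z₂ := by
  have hgeom := geom_sum₂_mul z₁ z₂ N
  have hSne : (∑ k ∈ Finset.range N, z₁^k * z₂^(N-1-k)) ≠ 0 := by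
    intro hS0
    have hterm : ∀ k ∈ Finset.range N, ‖z₁^k * z₂^(N-1-k) - (r:ℂ)^(N-1)‖ ≤ (r+1)^(N-1) - r^(N-1) := by
      intro k hk
      have hkN : k + (N-1-k) = N-1 := by
        have := Finset.mem_range.1 hk; omega
      have := pow_mul_near hr h₁ h₂ k (N-1-k)
      rwa [hkN] at this
    have heq : (∑ k ∈ Finset.range N, z₁^k * z₂^(N-1-k)) - (N:ℂ) * (r:ℂ)^(N-1)
        = ∑ k ∈ Finset.range N, (z₁^k * z₂^(N-1-k) - (r:ℂ)^(N-1)) := by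
      rw [Finset.sum_sub_distrib, Finset.sum_const, Finset.card_range, nsmul_eq_mul]
    have hdiff : ‖(∑ k ∈ Finset.range N, z₁^k * z₂^(N-1-k)) - (N:ℂ) * (r:ℂ)^(N-1)‖
        ≤ N * ((r+1)^(N-1) - r^(N-1)) := by
      rw [heq]
      calc ‖∑ k ∈ Finset.range N, (z₁^k * z₂^(N-1-k) - (r:ℂ)^(N-1))‖
          ≤ ∑ k ∈ Finset.range N, ‖z₁^k * z₂^(N-1-k) - (r:ℂ)^(N-1)‖ := norm_sum_le _ _
      _ ≤ ∑ _k ∈ Finset.range N, ((r+1)^(N-1) - r^(N-1)) := Finset.sum_le_sum hterm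
      _ = N * ((r+1)^(N-1) - r^(N-1)) := by
          rw [Finset.sum_const, Finset.card_range, nsmul_eq_mul]
    rw [hS0, zero_sub, norm_neg] at hdiff
    have hnorm : ‖(N:ℂ) * (r:ℂ)^(N-1)‖ = N * r^(N-1) := by
      rw [norm_mul, norm_pow, Complex.norm_natCast, Complex.norm_real, Real.norm_of_nonneg hr]
    rw [hnorm] at hdiff
    have hNpos : (0:ℝ) < N := by positivity
    nlinarith
  have hz : (∑ k ∈ Finset.range N, z₁^k * z₂^(N-1-k)) * (z₁ - z₂) = 0 := by
    rw [hgeom, h, sub_self]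
  exact sub_eq_zero.1 ((mul_eq_zero.1 hz).resolve_left hSne)

lemma pow_inj_near {N : ℕ} (hN : 2 ≤ N) {z₁ z₂ : ℂ}
    (h₁ : ‖z₁ - 2*((N:ℝ):ℂ)‖ ≤ 1) (h₂ : ‖z₂ - 2*((N:ℝ):ℂ)‖ ≤ 1) (h : z₁^N = z₂^N) : z₁ = z₂ :=
  pow_inj_aux hN (by positivity) (ratio_pow_lt_two hN) (by push_cast; exact h₁) (by push_cast; exact h₂) h


-- Taylor estimate for z^N at a coordinate
lemma coord_taylor {N : ℕ} (hN : 2 ≤ N) {a b : ℂ} (ha : ‖a‖ ≤ 1) (hb : ‖b‖ ≤ 1) :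
    ‖(a+b)^N - a^N - N * a^(N-1) * b‖ ≤ 2^N * ‖b‖^2 := by
  obtain ⟨M, rfl⟩ : ∃ M, N = M + 2 := ⟨N - 2, by omega⟩
  rw [add_pow]
  rw [Finset.sum_range_succ, Finset.sum_range_succ]
  have e1 : a ^ (M + 2) * b ^ (M + 2 - (M + 2)) * (Nat.choose (M+2) (M+2) : ℂ) = a^(M+2) := by
    simp
  have e2 : a ^ (M + 1) * b ^ (M + 2 - (M + 1)) * (Nat.choose (M+2) (M+1) : ℂ)
      = ((M+2:ℕ):ℂ) * a^(M+2-1) * b := by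
    have : M + 2 - (M+1) = 1 := by omega
    rw [this, Nat.choose_succ_self_right]
    push_cast
    ring_nf
  rw [e1, e2]
  have e3 : ∑ k ∈ Finset.range (M+1), a ^ k * b ^ (M + 2 - k) * (Nat.choose (M+2) k : ℂ)
      + ((M+2:ℕ):ℂ) * a^(M+2-1) * b + a^(M+2) - a^(M+2) - ((M+2:ℕ):ℂ) * a^(M+2-1) * b
      = ∑ k ∈ Finset.range (M+1), a ^ k * b ^ (M + 2 - k) * (Nat.choose (M+2) k : ℂ) := by
    ring
  rw [e3]
  calc ‖∑ k ∈ Finset.range (M+1), a ^ k * b ^ (M + 2 - k) * (Nat.choose (M+2) k : ℂ)‖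
      ≤ ∑ k ∈ Finset.range (M+1), ‖a ^ k * b ^ (M + 2 - k) * (Nat.choose (M+2) k : ℂ)‖ :=
        norm_sum_le _ _
  _ ≤ ∑ k ∈ Finset.range (M+1), (Nat.choose (M+2) k : ℝ) * ‖b‖^2 := by
      apply Finset.sum_le_sum
      intro k hk
      have hk' : k ≤ M := by have := Finset.mem_range.1 hk; omega
      rw [norm_mul, norm_mul, norm_pow, norm_pow, Complex.norm_natCast]
      have h1 : ‖a‖^k ≤ 1 := pow_le_one₀ (norm_nonneg a) ha
      have h2 : ‖b‖^(M+2-k) ≤ ‖b‖^2 := by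
        apply pow_le_pow_of_le_one (norm_nonneg b) hb
        omega
      calc ‖a‖^k * ‖b‖^(M+2-k) * (Nat.choose (M+2) k : ℝ)
          ≤ 1 * ‖b‖^2 * (Nat.choose (M+2) k : ℝ) := by
            gcongr
      _ = (Nat.choose (M+2) k : ℝ) * ‖b‖^2 := by ring
  _ ≤ ∑ k ∈ Finset.range (M+2+1), (Nat.choose (M+2) k : ℝ) * ‖b‖^2 := by
      apply Finset.sum_le_sum_of_subset_of_nonneg
      · intro k hk
        simp only [Finset.mem_range] at *
        omega
      · intro k _ _
        positivity
  _ = 2^(M+2) * ‖b‖^2 := by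
      rw [← Finset.sum_mul]
      congr 1
      rw [← Nat.cast_sum]
      rw [Nat.sum_range_choose]
      push_cast
      ring

lemma coord_geom_bound {N : ℕ} (hN : 2 ≤ N) {a b : ℂ} (ha : ‖a‖ ≤ 1) (hb : ‖b‖ ≤ 1) :
    ‖∑ k ∈ Finset.range N, a^k * b^(N-1-k)‖ ≤ N * (‖a‖ + ‖b‖) := by
  calc ‖∑ k ∈ Finset.range N, a^k * b^(N-1-k)‖
      ≤ ∑ k ∈ Finset.range N, ‖a^k * b^(N-1-k)‖ := norm_sum_le _ _
  _ ≤ ∑ _k ∈ Finset.range N, (‖a‖ + ‖b‖) := by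
      apply Finset.sum_le_sum
      intro k hk
      rw [norm_mul, norm_pow, norm_pow]
      rcases Nat.eq_zero_or_pos k with hk0 | hk1
      · subst hk0
        simp only [pow_zero, one_mul]
        have hN1 : N - 1 - 0 ≠ 0 := by omega
        calc ‖b‖^(N-1-0) ≤ ‖b‖ := pow_le_of_le_one (norm_nonneg b) hb hN1
        _ ≤ ‖a‖ + ‖b‖ := by linarith [norm_nonneg a]
      · calc ‖a‖^k * ‖b‖^(N-1-k) ≤ ‖a‖ * 1 := by
              apply mul_le_mul
              · exact pow_le_of_le_one (norm_nonneg a) ha (by omega)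
              · exact pow_le_one₀ (norm_nonneg b) hb
              · positivity
              · exact norm_nonneg a
        _ ≤ ‖a‖ + ‖b‖ := by rw [mul_one]; linarith [norm_nonneg b]
  _ = N * (‖a‖ + ‖b‖) := by rw [Finset.sum_const, Finset.card_range, nsmul_eq_mul]

lemma memℓp_of_sq_le {f : ℕ → ℂ} {g : ℕ → ℝ} (hg : Summable g) (h : ∀ j, ‖f j‖^2 ≤ g j) :
    Memℓp f 2 := by
  apply memℓp_gen
  have hs : Summable fun j => ‖f j‖^2 := hg.of_nonneg_of_le (fun j => by positivity) h
  simp only [two_toReal, Real.rpow_natCast]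
  exact hs

lemma f0_lip {N : ℕ} (hN : 2 ≤ N) (x y : ℓ2) (hx : ‖x‖ ≤ 1) (hy : ‖y‖ ≤ 1) :
    ‖(∑' j, (x j)^N) - ∑' j, (y j)^N‖ ≤ 2*N*‖x - y‖ := by
  have hNpos : (0:ℝ) ≤ N := by positivity
  set sfun : ∀ _ : ℕ, ℂ :=
    fun j => (starRingEnd ℂ) (∑ k ∈ Finset.range N, (x j)^k * (y j)^(N-1-k)) with hsfun
  have hsbound : ∀ j, ‖sfun j‖ ≤ N * (‖x j‖ + ‖y j‖) := fun j => by
    rw [hsfun]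
    rw [RCLike.norm_conj]
    exact coord_geom_bound hN ((l2_coord_le x j).trans hx) ((l2_coord_le y j).trans hy)
  have hsummand : Summable (fun j => 2*(N:ℝ)^2*(‖x j‖^2 + ‖y j‖^2)) :=
    ((l2_summable_sq x).add (l2_summable_sq y)).mul_left _
  have hsq : ∀ j, ‖sfun j‖^2 ≤ 2*(N:ℝ)^2*(‖x j‖^2 + ‖y j‖^2) := fun j => by
    nlinarith [hsbound j, norm_nonneg (sfun j), norm_nonneg (x j), norm_nonneg (y j),
      sq_nonneg (‖x j‖ - ‖y j‖)]
  have hmem : Memℓp sfun 2 := memℓp_of_sq_le hsummand hsq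
  set s : ℓ2 := ⟨sfun, hmem⟩ with hsdef
  have hsum1 := summable_pow_coord hN x hx
  have hsum2 := summable_pow_coord hN y hy
  have e1 : (∑' j, (x j)^N) - ∑' j, (y j)^N = ∑' j, ((x j)^N - (y j)^N) :=
    (Summable.tsum_sub hsum1 hsum2).symm
  have e2 : (inner ℂ s (x - y) : ℂ) = ∑' j, ((x j)^N - (y j)^N) := by
    rw [l2_inner_eq]
    congr 1
    funext j
    have hc : (x - y) j = x j - y j := by rw [lp.coeFn_sub]; rfl
    have hs : s j = sfun j := rfl
    rw [hc, hs, hsfun]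
    rw [Complex.conj_conj]
    exact geom_sum₂_mul (x j) (y j) N
  have hnorm_s : ‖s‖ ≤ 2*N := by
    have hs2 : ‖s‖^2 ≤ (2*(N:ℝ))^2 := by
      rw [l2_norm_sq]
      have hterm : ∀ j, ‖s j‖^2 ≤ 2*(N:ℝ)^2*(‖x j‖^2 + ‖y j‖^2) := fun j => hsq j
      calc ∑' j, ‖s j‖^2 ≤ ∑' j, 2*(N:ℝ)^2*(‖x j‖^2 + ‖y j‖^2) :=
            Summable.tsum_le_tsum hterm ((l2_summable_sq s)) hsummand
      _ = 2*(N:ℝ)^2*((∑' j, ‖x j‖^2) + ∑' j, ‖y j‖^2) := by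
            rw [tsum_mul_left, Summable.tsum_add (l2_summable_sq x) (l2_summable_sq y)]
      _ ≤ 2*(N:ℝ)^2*(1 + 1) := by
            gcongr
            · rw [← l2_norm_sq]; nlinarith [norm_nonneg x]
            · rw [← l2_norm_sq]; nlinarith [norm_nonneg y]
      _ ≤ (2*(N:ℝ))^2 := by nlinarith
    nlinarith [norm_nonneg s]
  calc ‖(∑' j, (x j)^N) - ∑' j, (y j)^N‖ = ‖(inner ℂ s (x-y) : ℂ)‖ := by rw [e1, ← e2]
  _ ≤ ‖s‖ * ‖x - y‖ := norm_inner_le_norm s (x-y)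
  _ ≤ 2*N*‖x-y‖ := by
      have := norm_nonneg (x - y)
      nlinarith [hnorm_s]

lemma dvec_mem {N : ℕ} (hN : 2 ≤ N) (x : ℓ2) (hx : ‖x‖ ≤ 1) :
    Memℓp (fun j => (starRingEnd ℂ) ((N:ℂ) * (x j)^(N-1))) 2 := by
  apply memℓp_of_sq_le (g := fun j => (N:ℝ)^2 * ‖x j‖^2)
      ((l2_summable_sq x).mul_left _)
  intro j
  rw [RCLike.norm_conj, norm_mul, norm_pow, Complex.norm_natCast]
  have h1 : ‖x j‖ ≤ 1 := (l2_coord_le x j).trans hx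
  have h2 : ‖x j‖^(N-1) ≤ ‖x j‖ := pow_le_of_le_one (norm_nonneg _) h1 (by omega)
  have h5 : (‖x j‖^(N-1))^2 ≤ ‖x j‖^2 :=
    pow_le_pow_left₀ (pow_nonneg (norm_nonneg _) _) h2 2
  calc ((N:ℝ) * ‖x j‖^(N-1))^2 = (N:ℝ)^2 * (‖x j‖^(N-1))^2 := by ring
  _ ≤ (N:ℝ)^2 * ‖x j‖^2 := mul_le_mul_of_nonneg_left h5 (sq_nonneg _)

lemma f0_hasFDerivAt {N : ℕ} (hN : 2 ≤ N) (x : ℓ2) (hx : ‖x‖ < 1) :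
    HasFDerivAt (fun z : ℓ2 => ∑' j, (z j)^N)
      ((innerSL ℂ) (⟨_, dvec_mem hN x hx.le⟩ : ℓ2)) x := by
  set v : ℓ2 := ⟨_, dvec_mem hN x hx.le⟩ with hv
  rw [hasFDerivAt_iff_isLittleO_nhds_zero]
  have key : ∀ u : ℓ2, ‖u‖ ≤ 1 - ‖x‖ →
      ‖(∑' j, ((x + u) j)^N) - (∑' j, (x j)^N) - (innerSL ℂ) v u‖ ≤ 2^N * ‖u‖^2 := by
    intro u hu
    have hxu : ‖x + u‖ ≤ 1 := by
      calc ‖x + u‖ ≤ ‖x‖ + ‖u‖ := norm_add_le x u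
      _ ≤ 1 := by linarith
    have hu1 : ‖u‖ ≤ 1 := by linarith [norm_nonneg x]
    have hsum1 := summable_pow_coord hN (x+u) hxu
    have hsum2 := summable_pow_coord hN x hx.le
    have hsum3 : Summable (fun j => (N:ℂ) * (x j)^(N-1) * u j) := by
      apply Summable.of_norm_bounded (g := fun j => (N:ℝ) * (‖x j‖^2 + ‖u j‖^2))
          (((l2_summable_sq x).add (l2_summable_sq u)).mul_left _)
      intro j
      rw [norm_mul, norm_mul, norm_pow, Complex.norm_natCast]
      have h1 : ‖x j‖ ≤ 1 := (l2_coord_le x j).trans hx.le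
      have h2 : ‖x j‖^(N-1) ≤ ‖x j‖ := pow_le_of_le_one (norm_nonneg _) h1 (by omega)
      have h3 : ‖x j‖ * ‖u j‖ ≤ ‖x j‖^2 + ‖u j‖^2 := by nlinarith [sq_nonneg (‖x j‖ - ‖u j‖)]
      have h4 : (0:ℝ) ≤ N := by positivity
      have step1 : (N:ℝ) * ‖x j‖^(N-1) * ‖u j‖ ≤ (N:ℝ) * (‖x j‖ * ‖u j‖) := by
        rw [mul_assoc]
        exact mul_le_mul_of_nonneg_left (mul_le_mul_of_nonneg_right h2 (norm_nonneg _)) h4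
      have step2 := mul_le_mul_of_nonneg_left h3 h4
      linarith
    have hinner : (innerSL ℂ) v u = ∑' j, (N:ℂ) * (x j)^(N-1) * u j := by
      have : (innerSL ℂ) v u = (inner ℂ v u : ℂ) := rfl
      rw [this, l2_inner_eq]
      congr 1
      funext j
      have hvj : v j = (starRingEnd ℂ) ((N:ℂ) * (x j)^(N-1)) := rfl
      rw [hvj, Complex.conj_conj]
    have e0 : (∑' j, ((x + u) j)^N) - (∑' j, (x j)^N) - (innerSL ℂ) v u
        = ∑' j, (((x + u) j)^N - (x j)^N - (N:ℂ) * (x j)^(N-1) * u j) := by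
      rw [hinner, Summable.tsum_sub (hsum1.sub hsum2) hsum3, Summable.tsum_sub hsum1 hsum2]
    rw [e0]
    have hterm : ∀ j, ‖((x + u) j)^N - (x j)^N - (N:ℂ) * (x j)^(N-1) * u j‖ ≤ 2^N * ‖u j‖^2 := by
      intro j
      have hc : (x + u) j = x j + u j := by rw [lp.coeFn_add]; rfl
      rw [hc]
      exact coord_taylor hN ((l2_coord_le x j).trans hx.le) ((l2_coord_le u j).trans hu1)
    have hsummand : Summable (fun j => (2:ℝ)^N * ‖u j‖^2) := (l2_summable_sq u).mul_left _
    calc ‖∑' j, (((x + u) j)^N - (x j)^N - (N:ℂ) * (x j)^(N-1) * u j)‖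
        ≤ ∑' j, ‖((x + u) j)^N - (x j)^N - (N:ℂ) * (x j)^(N-1) * u j‖ := by
          apply norm_tsum_le_tsum_norm
          exact hsummand.of_nonneg_of_le (fun j => norm_nonneg _) hterm
    _ ≤ ∑' j, (2:ℝ)^N * ‖u j‖^2 := by
          apply Summable.tsum_le_tsum hterm _ hsummand
          exact hsummand.of_nonneg_of_le (fun j => norm_nonneg _) hterm
    _ = 2^N * ‖u‖^2 := by rw [tsum_mul_left, ← l2_norm_sq]
  rw [Asymptotics.isLittleO_iff]
  intro c hc
  have hδ : (0:ℝ) < min (1 - ‖x‖) (c / 2^N) := by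
    apply lt_min (by linarith)
    positivity
  have hev : ∀ᶠ u : ℓ2 in nhds 0, ‖u‖ < min (1 - ‖x‖) (c / 2^N) := by
    have := Metric.ball_mem_nhds (0:ℓ2) hδ
    filter_upwards [this] with u hu
    simpa [mem_ball_zero_iff] using hu
  filter_upwards [hev] with u hu
  have h1 : ‖u‖ ≤ 1 - ‖x‖ := le_of_lt (lt_of_lt_of_le hu (min_le_left _ _))
  have h2 : ‖u‖ ≤ c / 2^N := le_of_lt (lt_of_lt_of_le hu (min_le_right _ _))
  calc ‖(∑' j, ((x + u) j)^N) - (∑' j, (x j)^N) - (innerSL ℂ) v u‖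
      ≤ 2^N * ‖u‖^2 := key u h1
  _ ≤ 2^N * ((c / 2^N) * ‖u‖) := by
      rw [pow_two]
      exact mul_le_mul_of_nonneg_left (mul_le_mul_of_nonneg_right h2 (norm_nonneg u))
        (by positivity)
  _ = c * ‖u‖ := by field_simp

def sing (n : ℕ) : ℓ2 := lp.single 2 n (1:ℂ)

lemma sing_apply_self (n : ℕ) : sing n n = 1 := lp.single_apply_self 2 n 1

lemma sing_apply_ne (n : ℕ) {j : ℕ} (hj : j ≠ n) : sing n j = 0 := lp.single_apply_ne 2 n 1 hj

lemma norm_sing (n : ℕ) : ‖sing n‖ = 1 := by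
  have := lp.norm_single (p := 2) (E := fun _ : ℕ => ℂ) (by norm_num) n (1:ℂ)
  exact this.trans norm_one

lemma tsum_bump {N : ℕ} (hN : 2 ≤ N) (v : ℓ2) (c : ℂ) (n : ℕ)
    (hv : ‖v‖ ≤ 1) (hw : ‖v + c • sing n‖ ≤ 1) :
    ∑' j, ((v + c • sing n) j)^N = (∑' j, (v j)^N) + ((v n + c)^N - (v n)^N) := by
  set w : ℓ2 := v + c • sing n with hwdef
  have hcoe : ∀ j, w j = v j + c * (sing n j) := by
    intro j
    rw [hwdef, lp.coeFn_add, lp.coeFn_smul]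
    rfl
  have hcoe_ne : ∀ j, j ≠ n → w j = v j := by
    intro j hj
    rw [hcoe j, sing_apply_ne n hj, mul_zero, add_zero]
  have hcoe_n : w n = v n + c := by
    rw [hcoe n, sing_apply_self, mul_one]
  have hsum1 := summable_pow_coord hN w hw
  have hsum2 := summable_pow_coord hN v hv
  have e1 : (∑' j, (w j)^N) - ∑' j, (v j)^N = ∑' j, ((w j)^N - (v j)^N) :=
    (Summable.tsum_sub hsum1 hsum2).symm
  have e2 : ∑' j, ((w j)^N - (v j)^N) = (w n)^N - (v n)^N := by
    apply tsum_eq_single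
    intro j hj
    rw [hcoe_ne j hj, sub_self]
  have e3 := e1.trans e2
  rw [hcoe_n] at e3
  linear_combination e3

lemma inner_sing (n : ℕ) (c : ℂ) (u : ℓ2) : (inner ℂ (c • sing n) u : ℂ) = (starRingEnd ℂ) c * u n := by
  rw [inner_smul_left]
  have : (inner ℂ (sing n) u : ℂ) = u n := by
    have h := lp.inner_single_left (𝕜 := ℂ) (G := fun _ : ℕ => ℂ) n (1:ℂ) u
    simpa [sing] using h
  rw [this]

lemma coord_tendsto (u : ℓ2) : Filter.Tendsto (fun n => u n) Filter.atTop (nhds (0:ℂ)) := by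
  rw [tendsto_zero_iff_norm_tendsto_zero]
  have h1 : Filter.Tendsto (fun n => ‖u n‖^2) Filter.atTop (nhds 0) :=
    (l2_summable_sq u).tendsto_atTop_zero
  have h2 : Filter.Tendsto (fun n => Real.sqrt (‖u n‖^2)) Filter.atTop (nhds (Real.sqrt 0)) :=
    (Real.continuous_sqrt.continuousAt).tendsto.comp h1
  simpa [Real.sqrt_sq_eq_abs] using h2

lemma zero_mem_oB : (0:ℓ2) ∈ oB := by simp [oB]

instance : Nonempty oB := ⟨⟨0, zero_mem_oB⟩⟩

lemma norm_le_supNorm {f : ℓ2 → ℂ} {C : ℝ} (hC : ∀ y ∈ oB, ‖f y‖ ≤ C) {x : ℓ2} (hx : x ∈ oB) :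
    ‖f x‖ ≤ supNorm f :=
  le_ciSup (f := fun y : oB => ‖f (y:ℓ2)‖) ⟨C, by rintro - ⟨y, rfl⟩; exact hC y y.2⟩ ⟨x, hx⟩

lemma supNorm_le {f : ℓ2 → ℂ} {C : ℝ} (h : ∀ x ∈ oB, ‖f x‖ ≤ C) : supNorm f ≤ C :=
  ciSup_le (fun x => h x x.2)

lemma norm_le_supNormV {f : ℓ2 → ℓ2} {C : ℝ} (hC : ∀ y ∈ oB, ‖f y‖ ≤ C) {x : ℓ2} (hx : x ∈ oB) :
    ‖f x‖ ≤ supNormV f :=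
  le_ciSup (f := fun y : oB => ‖f (y:ℓ2)‖) ⟨C, by rintro - ⟨y, rfl⟩; exact hC y y.2⟩ ⟨x, hx⟩

lemma supNormV_le {f : ℓ2 → ℓ2} {C : ℝ} (h : ∀ x ∈ oB, ‖f x‖ ≤ C) : supNormV f ≤ C :=
  ciSup_le (fun x => h x x.2)
/-- for `f₀(x) = Σ_j xⱼ^N` (`N ≥ 2`), `f₀ ∈ 𝒜ᵤ(B)`, and for every `g` with
`‖g‖ < 1` the cluster set `𝒞ℓ(f₀,g)` contains an analytic copy of the ball of `ℋ^∞(B)`. -/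
theorem stmt15 (N : ℕ) (hN : 2 ≤ N) (f₀ : ℓ2 → ℂ)
    (hf₀def : ∀ x : ℓ2, f₀ x = ∑' j : ℕ, (x j) ^ N) :
    MemAu f₀ ∧
    ∀ g, MemHinfV g → supNormV g < 1 → ∀ fext, IsExt f₀ fext →
      ∃ Ψ : (ℓ2 → ℂ) → (ℓ2 → ℂ),
        -- injectivity (elements of ℋ^∞(B) identified on B)
        (∀ h₁ ∈ ballH, ∀ h₂ ∈ ballH,
          Set.EqOn (Ψ h₁) (Ψ h₂) oB → Set.EqOn h₁ h₂ oB) ∧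
        -- the image is contained in the cluster set 𝒞ℓ(f₀,g)
        (∀ h ∈ ballH, MemHinf (Ψ h) ∧ InCluster fext g (Ψ h)) ∧
        -- analyticity: for every x ∈ B, h ↦ Ψ(h)(x) is holomorphic on the ball of ℋ^∞(B)
        (∀ x ∈ oB, HolomorphicOnBallH (fun h => Ψ h x)) := by
  have hf0fun : f₀ = fun x : ℓ2 => ∑' j, (x j)^N := funext hf₀def
  have hNR : (0:ℝ) < 2*(N:ℝ)+1 := by positivity
  have hf0diff : DifferentiableOn ℂ f₀ oB := by
    rw [hf0fun]
    intro x hx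
    exact ((f0_hasFDerivAt hN x (mem_ball_zero_iff.1 hx)).differentiableAt).differentiableWithinAt
  have hf0bound : ∀ x ∈ oB, ‖f₀ x‖ ≤ 1 := by
    intro x hx
    rw [hf₀def]
    have hx1 : ‖x‖ ≤ 1 := (mem_ball_zero_iff.1 hx).le
    calc ‖∑' j, (x j)^N‖ ≤ ‖x‖^2 := tsum_pow_norm_le hN x hx1
    _ ≤ 1 := by nlinarith [norm_nonneg x]
  have hMemAu : MemAu f₀ := by
    constructor
    · exact hf0diff
    · apply LipschitzOnWith.uniformContinuousOn (K := (⟨2*(N:ℝ), by positivity⟩ : NNReal))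
      refine LipschitzOnWith.of_dist_le_mul ?_
      intro x hx y hy
      rw [dist_eq_norm, dist_eq_norm, hf₀def, hf₀def]
      exact f0_lip hN x y (mem_ball_zero_iff.1 hx).le (mem_ball_zero_iff.1 hy).le
  refine ⟨hMemAu, ?_⟩
  intro g hg hgnorm fext hfext
  obtain ⟨Cg, hCg⟩ := hg.2
  have hgx : ∀ x ∈ oB, ‖g x‖ ≤ supNormV g := fun x hx => norm_le_supNormV hCg hx
  have hgoB : ∀ x ∈ oB, g x ∈ oB := fun x hx =>
    mem_ball_zero_iff.2 (lt_of_le_of_lt (hgx x hx) hgnorm)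
  have hr0 : 0 ≤ supNormV g := le_trans (norm_nonneg _) (hgx 0 zero_mem_oB)
  set r : ℝ := supNormV g with hrdef
  set t : ℝ := (1 - r)/(2*(2*(N:ℝ)+1)) with htdef
  have ht0 : 0 < t := div_pos (by linarith [hgnorm]) (by positivity)
  have htsum : r + t * (2*(N:ℝ)+1) < 1 := by
    rw [htdef]
    have h2 : (1-r)/(2*(2*(N:ℝ)+1)) * (2*(N:ℝ)+1) = (1-r)/2 := by field_simp
    rw [h2]
    linarith [hgnorm]
  -- the candidate map
  set Ψ : (ℓ2 → ℂ) → ℓ2 → ℂ :=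
    fun h x => fext (g x) + ((t:ℂ) * (h x + (2*(N:ℝ):ℂ)))^N with hΨdef
  -- bound on values of members of ballH
  have hballH_val : ∀ h ∈ ballH, ∀ x ∈ oB, ‖h x‖ ≤ 1 := by
    intro h hh x hx
    obtain ⟨Ch, hCh⟩ := hh.1.2
    exact le_trans (norm_le_supNorm hCh hx) hh.2.le
  -- bump coefficient bound
  have hcoef : ∀ h : ℓ2 → ℂ, (∀ x ∈ oB, ‖h x‖ ≤ 1) → ∀ x ∈ oB,
      ‖(t:ℂ) * (h x + (2*(N:ℝ):ℂ))‖ ≤ t * (2*(N:ℝ)+1) := by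
    intro h hh x hx
    rw [norm_mul, Complex.norm_real, Real.norm_of_nonneg ht0.le]
    apply mul_le_mul_of_nonneg_left _ ht0.le
    have h2N : ‖(2 * ((N:ℝ):ℂ) : ℂ)‖ = 2*(N:ℝ) := by
      rw [norm_mul, Complex.norm_real, Real.norm_of_nonneg (Nat.cast_nonneg N)]
      norm_num
    calc ‖h x + (2*(N:ℝ):ℂ)‖ ≤ ‖h x‖ + ‖(2 * ((N:ℝ):ℂ) : ℂ)‖ := norm_add_le _ _
    _ ≤ 1 + (2*(N:ℝ)) := by
        rw [h2N]
        gcongr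
        exact hh x hx
    _ = 2*(N:ℝ)+1 := by ring
  refine ⟨Ψ, ?_, ?_, ?_⟩
  · -- injectivity
    intro h₁ hh₁ h₂ hh₂ heq x hx
    have he := heq hx
    simp only [hΨdef] at he
    have he2 : ((t:ℂ) * (h₁ x + (2*(N:ℝ):ℂ)))^N = ((t:ℂ) * (h₂ x + (2*(N:ℝ):ℂ)))^N :=
      add_left_cancel he
    rw [mul_pow, mul_pow] at he2
    have ht0' : ((t:ℝ):ℂ)^N ≠ 0 := by
      apply pow_ne_zero
      simp only [ne_eq, Complex.ofReal_eq_zero]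
      exact ht0.ne'
    have he3 : (h₁ x + (2*(N:ℝ):ℂ))^N = (h₂ x + (2*(N:ℝ):ℂ))^N := mul_left_cancel₀ ht0' he2
    have hn1 : ‖(h₁ x + (2*(N:ℝ):ℂ)) - (2*(N:ℝ):ℂ)‖ ≤ 1 := by
      simp only [add_sub_cancel_right]
      exact hballH_val h₁ hh₁ x hx
    have hn2 : ‖(h₂ x + (2*(N:ℝ):ℂ)) - (2*(N:ℝ):ℂ)‖ ≤ 1 := by
      simp only [add_sub_cancel_right]
      exact hballH_val h₂ hh₂ x hx
    have := pow_inj_near hN hn1 hn2 he3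
    exact add_right_cancel this
  · -- cluster set
    intro h hh
    have hhval := hballH_val h hh
    constructor
    · -- MemHinf (Ψ h)
      constructor
      · apply DifferentiableOn.add
        · exact (hf0diff.comp hg.1 hgoB).congr (fun x hx => hfext.2 (hgoB x hx))
        · apply DifferentiableOn.pow
          exact ((hh.1.1.add_const _).const_mul _)
      · refine ⟨1 + (t*(2*(N:ℝ)+1))^N, ?_⟩
        intro x hx
        simp only [hΨdef]
        calc ‖fext (g x) + ((t:ℂ) * (h x + (2*(N:ℝ):ℂ)))^N‖
            ≤ ‖fext (g x)‖ + ‖(t:ℂ) * (h x + (2*(N:ℝ):ℂ))‖^N := by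
              rw [← norm_pow]; exact norm_add_le _ _
        _ ≤ 1 + (t*(2*(N:ℝ)+1))^N := by
            gcongr
            · rw [hfext.2 (hgoB x hx)]
              exact hf0bound (g x) (hgoB x hx)
            · exact hcoef h hhval x hx
    · -- InCluster
      refine ⟨ℕ, Filter.atTop, Filter.atTop_neBot, fun n x => g x + ((t:ℂ) * (h x + (2*(N:ℝ):ℂ))) • sing n, ?_, ?_, ?_⟩
      · -- each in ballHV
        intro n
        have hbound : ∀ x ∈ oB, ‖g x + ((t:ℂ) * (h x + (2*(N:ℝ):ℂ))) • sing n‖ ≤ r + t*(2*(N:ℝ)+1) := by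
          intro x hx
          calc ‖g x + ((t:ℂ) * (h x + (2*(N:ℝ):ℂ))) • sing n‖
              ≤ ‖g x‖ + ‖(t:ℂ) * (h x + (2*(N:ℝ):ℂ))‖ * ‖sing n‖ := by
                rw [← norm_smul]; exact norm_add_le _ _
          _ ≤ r + t*(2*(N:ℝ)+1) := by
              rw [norm_sing, mul_one]
              exact add_le_add (hgx x hx) (hcoef h hhval x hx)
        constructor
        · constructor
          · apply DifferentiableOn.add hg.1
            apply DifferentiableOn.smul_const
            exact (hh.1.1.add_const _).const_mul _
          · exact ⟨r + t*(2*(N:ℝ)+1), hbound⟩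
        · exact lt_of_le_of_lt (supNormV_le hbound) htsum
      · -- weak-star convergence
        intro y hy u
        have : ∀ n : ℕ, (inner ℂ (g y + ((t:ℂ) * (h y + (2*(N:ℝ):ℂ))) • sing n) u : ℂ)
            = inner ℂ (g y) u + (starRingEnd ℂ) ((t:ℂ) * (h y + (2*(N:ℝ):ℂ))) * u n := by
          intro n
          rw [inner_add_left, inner_sing]
        simp only [this]
        have htd : Filter.Tendsto
            (fun n : ℕ => (starRingEnd ℂ) ((t:ℂ) * (h y + (2*(N:ℝ):ℂ))) * u n)
            Filter.atTop (nhds 0) := by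
          have := (coord_tendsto u).const_mul ((starRingEnd ℂ) ((t:ℂ) * (h y + (2*(N:ℝ):ℂ))))
          simpa using this
        have hconst : Filter.Tendsto (fun _ : ℕ => (inner ℂ (g y) u : ℂ)) Filter.atTop
            (nhds (inner ℂ (g y) u)) := tendsto_const_nhds
        have := hconst.add htd
        simpa using this
      · -- value convergence
        intro y hy
        have hgy1 : ‖g y‖ ≤ 1 := (hgx y hy).trans hgnorm.le
        have hin : ∀ n : ℕ, ‖g y + ((t:ℂ) * (h y + (2*(N:ℝ):ℂ))) • sing n‖ ≤ r + t*(2*(N:ℝ)+1) := by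
          intro n
          calc ‖g y + ((t:ℂ) * (h y + (2*(N:ℝ):ℂ))) • sing n‖
              ≤ ‖g y‖ + ‖(t:ℂ) * (h y + (2*(N:ℝ):ℂ))‖ * ‖sing n‖ := by
                rw [← norm_smul]; exact norm_add_le _ _
          _ ≤ r + t*(2*(N:ℝ)+1) := by
              rw [norm_sing, mul_one]
              exact add_le_add (hgx y hy) (hcoef h hhval y hy)
        have hinB : ∀ n : ℕ, (g y + ((t:ℂ) * (h y + (2*(N:ℝ):ℂ))) • sing n) ∈ oB := by
          intro n
          exact mem_ball_zero_iff.2 (lt_of_le_of_lt (hin n) htsum)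
        have hval : ∀ n : ℕ, fext (g y + ((t:ℂ) * (h y + (2*(N:ℝ):ℂ))) • sing n)
            = f₀ (g y) + ((g y n + (t:ℂ) * (h y + (2*(N:ℝ):ℂ)))^N - (g y n)^N) := by
          intro n
          rw [hfext.2 (hinB n), hf₀def, hf₀def]
          exact tsum_bump hN (g y) _ n hgy1 ((hin n).trans htsum.le)
        simp only [hval]
        have hΨval : Ψ h y = f₀ (g y) + ((t:ℂ) * (h y + (2*(N:ℝ):ℂ)))^N := by
          simp only [hΨdef]
          rw [hfext.2 (hgoB y hy)]
        rw [hΨval]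
        apply Filter.Tendsto.const_add
        have hcont : Filter.Tendsto
            (fun a : ℂ => (a + (t:ℂ) * (h y + (2*(N:ℝ):ℂ)))^N - a^N)
            (nhds 0) (nhds (((t:ℂ) * (h y + (2*(N:ℝ):ℂ)))^N)) := by
          have hc : Continuous (fun a : ℂ => (a + (t:ℂ) * (h y + (2*(N:ℝ):ℂ)))^N - a^N) :=
            ((continuous_pow N).comp (continuous_add_right _)).sub (continuous_pow N)
          have := hc.tendsto 0
          simpa [zero_pow (by omega : N ≠ 0)] using this
        exact hcont.comp (coord_tendsto (g y))
  · -- holomorphy in h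
    intro x hx
    constructor
    · -- local boundedness
      intro h hh
      refine ⟨1, one_pos, ‖fext (g x)‖ + (t*(2*(N:ℝ)+1))^N, ?_⟩
      intro k hk _
      simp only [hΨdef]
      calc ‖fext (g x) + ((t:ℂ) * (k x + (2*(N:ℝ):ℂ)))^N‖
          ≤ ‖fext (g x)‖ + ‖(t:ℂ) * (k x + (2*(N:ℝ):ℂ))‖^N := by
            rw [← norm_pow]; exact norm_add_le _ _
      _ ≤ ‖fext (g x)‖ + (t*(2*(N:ℝ)+1))^N := by
          gcongr
          exact hcoef k (hballH_val k hk) x hx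
    · -- differentiability along lines
      intro h hh k hk
      apply Differentiable.differentiableOn
      have : (fun z : ℂ => Ψ (h + z • k) x)
          = fun z : ℂ => fext (g x) + ((t:ℂ) * ((h x + z * k x) + (2*(N:ℝ):ℂ)))^N := by
        funext z
        rw [hΨdef]
        simp [Pi.add_apply, Pi.smul_apply, smul_eq_mul]
      rw [this]
      apply Differentiable.const_add
      apply Differentiable.pow
      apply Differentiable.const_mul
      apply Differentiable.add_const
      exact (differentiable_id.mul_const _).const_add _
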